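/- arXiv:1006.2883 — 5 statements merged into one kernel-verified Lean document; each statement's English description precedes it below -/
import Mathlib

section
/- If a random vector X in R^n has a log-concave probability density f, then h(X) ≤ n + n · log(‖f‖_∞^{-1/n}) = n - log ‖f‖_∞, with equality when f(x) = e^{-(x_1+⋯+x_n)} on the positive orthant. -/
open MeasureTheory Real ENNReal Filter

private lemma aux_lintegral_comp (n : ℕ) (g : EuclideanSpace ℝ (Fin n) → ℝ≥0∞)
    (hg : Measurable g) {t : ℝ} (ht : 0 < t) (v : EuclideanSpace ℝ (Fin n)) :
    ∫⁻ x, g (t • x + v) = ENNReal.ofReal ((t ^ n)⁻¹) * ∫⁻ x, g x := by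
  have h1 : (∫⁻ x, g (t • x + v)) = ∫⁻ x, (fun y => g (y + v)) (t • x) := rfl
  have hmg : Measurable fun y => g (y + v) := hg.comp (measurable_add_const v)
  have h2 := lintegral_add_right_eq_self
    (μ := (volume : Measure (EuclideanSpace ℝ (Fin n)))) g v
  rw [h1, ← lintegral_map hmg (measurable_const_smul t),
    Measure.map_addHaar_smul volume ht.ne', finrank_euclideanSpace_fin,
    lintegral_smul_measure, abs_of_nonneg (by positivity)]
  exact congrArg _ h2

private lemma key_ineq (n : ℕ) (f : EuclideanSpace ℝ (Fin n) → ℝ)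
    (hf : ∀ x, 0 ≤ f x) (hmeas : Measurable f) (hint : Integrable f)
    (hprob : ∫ x, f x = 1)
    (hlc : ∀ x y : EuclideanSpace ℝ (Fin n), ∀ a b : ℝ, 0 ≤ a → 0 ≤ b → a + b = 1 →
      f x ^ a * f y ^ b ≤ f (a • x + b • y))
    (hent : Integrable (fun x => f x * Real.log (f x)))
    (x₀ : EuclideanSpace ℝ (Fin n)) (hx₀ : 0 < f x₀) :
    Real.log (f x₀) ≤ n + ∫ x, f x * Real.log (f x) := by
  set c := f x₀ with hc
  have hL1 : (∫⁻ x, ENNReal.ofReal (f x)) = 1 := by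
    rw [← ofReal_integral_eq_lintegral_ofReal hint (.of_forall hf), hprob, ENNReal.ofReal_one]
  have main : ∀ ε : ℝ, ε ∈ Set.Ioo (0:ℝ) 1 →
      Real.log c - ∫ x, f x * Real.log (f x) ≤ (((1-ε)^n)⁻¹ - 1)/ε := by
    rintro ε ⟨hε0, hε1⟩
    have ht : (0:ℝ) < 1 - ε := by linarith
    have hcnn : (0:ℝ) ≤ c ^ (-ε) := Real.rpow_nonneg hx₀.le _
    have hpt : ∀ x, (f x) ^ (1-ε) ≤ c ^ (-ε) * f ((1-ε) • x + ε • x₀) := by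
      intro x
      have h := hlc x x₀ (1-ε) ε ht.le hε0.le (by ring)
      rw [← hc] at h
      have hcε : 0 < c ^ ε := Real.rpow_pos_of_pos hx₀ ε
      rw [Real.rpow_neg hx₀.le, inv_mul_eq_div, le_div_iff₀ hcε]
      exact h
    have hmcomp : Measurable fun x => ENNReal.ofReal (f ((1-ε) • x + ε • x₀)) :=
      ENNReal.measurable_ofReal.comp (hmeas.comp (by fun_prop))
    have hlint : (∫⁻ x, ENNReal.ofReal ((f x) ^ (1-ε)))
        ≤ ENNReal.ofReal (c^(-ε) * ((1-ε)^n)⁻¹) := by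
      calc (∫⁻ x, ENNReal.ofReal ((f x) ^ (1-ε)))
          ≤ ∫⁻ x, ENNReal.ofReal (c^(-ε)) * ENNReal.ofReal (f ((1-ε) • x + ε • x₀)) := by
            apply lintegral_mono; intro x; dsimp only
            rw [← ENNReal.ofReal_mul hcnn]
            exact ENNReal.ofReal_le_ofReal (hpt x)
        _ = ENNReal.ofReal (c^(-ε)) * ∫⁻ x, ENNReal.ofReal (f ((1-ε) • x + ε • x₀)) :=
            lintegral_const_mul _ hmcomp
        _ = ENNReal.ofReal (c^(-ε)) * (ENNReal.ofReal (((1-ε)^n)⁻¹) * 1) := by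
            rw [aux_lintegral_comp n (fun y => ENNReal.ofReal (f y))
              (ENNReal.measurable_ofReal.comp hmeas) ht (ε • x₀), hL1]
        _ = ENNReal.ofReal (c^(-ε) * ((1-ε)^n)⁻¹) := by
            rw [mul_one, ← ENNReal.ofReal_mul hcnn]
    have hmeas2 : Measurable fun x => (f x) ^ (1-ε) := by fun_prop
    have hrnn : ∀ x, (0:ℝ) ≤ (f x) ^ (1-ε) := fun x => Real.rpow_nonneg (hf x) _
    have hint2 : Integrable (fun x => (f x) ^ (1-ε)) := by
      refine ⟨hmeas2.aestronglyMeasurable, ?_⟩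
      rw [hasFiniteIntegral_iff_ofReal (.of_forall hrnn)]
      exact lt_of_le_of_lt hlint ENNReal.ofReal_lt_top
    have hI2 : (∫ x, (f x) ^ (1-ε)) ≤ c^(-ε) * ((1-ε)^n)⁻¹ := by
      rw [← ENNReal.ofReal_le_ofReal_iff (mul_nonneg hcnn (by positivity)),
        ofReal_integral_eq_lintegral_ofReal hint2 (.of_forall hrnn)]
      exact hlint
    have hpt2 : ∀ x, f x * (Real.log c - Real.log (f x)) ≤ (c^ε * (f x)^(1-ε) - f x)/ε := by
      intro x
      rcases eq_or_lt_of_le (hf x) with h0 | h0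
      · rw [← h0, Real.zero_rpow ht.ne']
        simp
      · have hu : (0:ℝ) < c / f x := by positivity
        have hlog : Real.log ((c / f x) ^ ε) ≤ (c / f x)^ε - 1 :=
          Real.log_le_sub_one_of_pos (Real.rpow_pos_of_pos hu ε)
        rw [Real.log_rpow hu, Real.log_div hx₀.ne' h0.ne'] at hlog
        have hrw : c^ε * (f x)^(1-ε) = f x * (c / f x)^ε := by
          rw [Real.div_rpow hx₀.le (hf x)]
          rw [show (1:ℝ)-ε = 1 + (-ε) by ring, Real.rpow_add h0, Real.rpow_one,
            Real.rpow_neg (hf x)]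
          field_simp
        rw [le_div_iff₀ hε0]
        have h2 := mul_le_mul_of_nonneg_left hlog (hf x)
        nlinarith [h2, hrw]
    have hintL : Integrable (fun x => f x * (Real.log c - Real.log (f x))) := by
      have h : (fun x => f x * (Real.log c - Real.log (f x)))
          = fun x => f x * Real.log c - f x * Real.log (f x) := by funext x; ring
      rw [h]; exact (hint.mul_const _).sub hent
    have hintR : Integrable (fun x => (c^ε * (f x)^(1-ε) - f x)/ε) :=
      ((hint2.const_mul _).sub hint).div_const _
    have hIneq := integral_mono hintL hintR hpt2
    have hEL : (∫ x, f x * (Real.log c - Real.log (f x)))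
        = Real.log c - ∫ x, f x * Real.log (f x) := by
      have h : (fun x => f x * (Real.log c - Real.log (f x)))
          = fun x => f x * Real.log c - f x * Real.log (f x) := by funext x; ring
      rw [h, integral_sub (hint.mul_const _) hent, integral_mul_const, hprob, one_mul]
    have hER : (∫ x, (c^ε * (f x)^(1-ε) - f x)/ε)
        = (c^ε * (∫ x, (f x)^(1-ε)) - 1)/ε := by
      rw [integral_div, integral_sub (hint2.const_mul _) hint, integral_const_mul, hprob]
    rw [hEL, hER] at hIneq
    have hcc : c^ε * (c^(-ε) * ((1-ε)^n)⁻¹) = ((1-ε)^n)⁻¹ := by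
      rw [← mul_assoc, ← Real.rpow_add hx₀]; simp
    have hAB : c^ε * (∫ x, (f x)^(1-ε)) ≤ ((1-ε)^n)⁻¹ := by
      calc c^ε * (∫ x, (f x)^(1-ε))
          ≤ c^ε * (c^(-ε) * ((1-ε)^n)⁻¹) :=
            mul_le_mul_of_nonneg_left hI2 (Real.rpow_nonneg hx₀.le ε)
        _ = ((1-ε)^n)⁻¹ := hcc
    have hstep : (c^ε * (∫ x, (f x)^(1-ε)) - 1)/ε ≤ (((1-ε)^n)⁻¹ - 1)/ε := by gcongr
    linarith
  have hlim : Tendsto (fun ε : ℝ => (((1-ε)^n)⁻¹ - 1)/ε) (nhdsWithin 0 (Set.Ioi 0)) (nhds n) := by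
    have h1 : HasDerivAt (fun ε : ℝ => ((1-ε)^n)⁻¹) n 0 := by
      have h2 : HasDerivAt (fun ε : ℝ => (1-ε)^n) (-(n:ℝ)) 0 := by
        have h : HasDerivAt (fun ε : ℝ => 1-ε) (-1) 0 := (hasDerivAt_id 0).const_sub 1
        simpa using h.fun_pow n
      simpa using h2.fun_inv (by simp)
    rw [hasDerivAt_iff_tendsto_slope] at h1
    refine (h1.mono_left (nhdsWithin_mono _ fun x hx => ne_of_gt hx)).congr (fun x => ?_)
    simp [slope_def_field]
  have hev : ∀ᶠ ε in nhdsWithin (0:ℝ) (Set.Ioi 0),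
      Real.log c - ∫ x, f x * Real.log (f x) ≤ (((1-ε)^n)⁻¹ - 1)/ε :=
    Filter.eventually_of_mem (Ioo_mem_nhdsGT_of_mem ⟨le_refl 0, one_pos⟩) main
  have := ge_of_tendsto hlim hev
  linarith

private noncomputable def gfun {n : ℕ} (j i : Fin n) : ℝ → ℝ :=
  fun u => (if 0 < u then Real.exp (-u) else 0) * (if i = j then u else 1)

private lemma gfun_eq_diag {n : ℕ} (j : Fin n) :
    gfun j j = Set.indicator (Set.Ioi 0) (fun u => u * Real.exp (-u)) := by
  funext u
  simp only [gfun, if_pos rfl, Set.indicator, Set.mem_Ioi]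
  by_cases hu : 0 < u <;> simp [hu, mul_comm]

private lemma gfun_eq_off {n : ℕ} {j i : Fin n} (h : i ≠ j) :
    gfun j i = Set.indicator (Set.Ioi 0) (fun u => Real.exp (-u)) := by
  funext u
  simp only [gfun, if_neg h, Set.indicator, Set.mem_Ioi, mul_one]

private lemma gfun_integrable {n : ℕ} (j i : Fin n) : Integrable (gfun j i) := by
  by_cases h : i = j
  · subst h
    rw [gfun_eq_diag]
    refine IntegrableOn.integrable_indicator ?_ measurableSet_Ioi
    have := Real.GammaIntegral_convergent (s := 2) (by norm_num)
    refine this.congr_fun ?_ measurableSet_Ioi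
    intro u hu
    show Real.exp (-u) * u ^ ((2:ℝ)-1) = u * Real.exp (-u)
    rw [show (2:ℝ)-1 = 1 by norm_num, Real.rpow_one]; ring
  · rw [gfun_eq_off h]
    refine IntegrableOn.integrable_indicator ?_ measurableSet_Ioi
    simpa using exp_neg_integrableOn_Ioi 0 one_pos

private lemma gfun_integral {n : ℕ} (j i : Fin n) : ∫ u, gfun j i u = 1 := by
  by_cases h : i = j
  · subst h
    rw [gfun_eq_diag, integral_indicator measurableSet_Ioi]
    have h2 : (∫ u in Set.Ioi (0:ℝ), u * Real.exp (-u))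
        = ∫ u in Set.Ioi (0:ℝ), Real.exp (-u) * u ^ ((2:ℝ)-1) := by
      refine setIntegral_congr_fun measurableSet_Ioi fun u hu => ?_
      show u * Real.exp (-u) = Real.exp (-u) * u ^ ((2:ℝ)-1)
      rw [show (2:ℝ)-1 = 1 by norm_num, Real.rpow_one]; ring
    rw [h2, ← Real.Gamma_eq_integral (by norm_num : (0:ℝ) < 2), Real.Gamma_two]
  · rw [gfun_eq_off h, integral_indicator measurableSet_Ioi]
    simpa using integral_exp_neg_Ioi (0:ℝ)

private lemma entropy_pi (n : ℕ) :
    (∫ x : Fin n → ℝ, if ∀ i, 0 < x i then (-∑ i, x i) * Real.exp (-∑ i, x i) else 0)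
      = -(n:ℝ) := by
  have hptw : ∀ x : Fin n → ℝ,
      (if ∀ i, 0 < x i then (-∑ i, x i) * Real.exp (-∑ i, x i) else 0)
      = -∑ j, ∏ i, gfun j i (x i) := by
    intro x
    by_cases h : ∀ i, 0 < x i
    · rw [if_pos h]
      have hprod : ∀ j, ∏ i, gfun j i (x i) = Real.exp (-∑ i, x i) * x j := by
        intro j
        have heq : ∀ i, gfun j i (x i) = Real.exp (-(x i)) * (if i = j then x i else 1) := by
          intro i; simp only [gfun, if_pos (h i)]
        simp_rw [heq]
        rw [Finset.prod_mul_distrib]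
        congr 1
        · rw [← Real.exp_sum]; simp
        · simp
      simp_rw [hprod]
      rw [← Finset.mul_sum]
      ring
    · rw [if_neg h]
      push_neg at h
      obtain ⟨i₀, hi₀⟩ := h
      have hz : ∀ j, ∏ i, gfun j i (x i) = 0 := by
        intro j
        apply Finset.prod_eq_zero (Finset.mem_univ i₀)
        simp [gfun, not_lt.mpr hi₀]
      simp [hz]
  calc (∫ x : Fin n → ℝ, if ∀ i, 0 < x i then (-∑ i, x i) * Real.exp (-∑ i, x i) else 0)
      = ∫ x : Fin n → ℝ, -∑ j, ∏ i, gfun j i (x i) := by simp_rw [hptw]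
    _ = -∑ j, ∫ x : Fin n → ℝ, ∏ i, gfun j i (x i) := by
        rw [integral_neg, integral_finset_sum (μ := volume) _
          (fun j _ => (Integrable.fintype_prod (fun i => gfun_integrable j i) : Integrable _ volume))]
    _ = -(n:ℝ) := by
        have hone : ∀ j : Fin n, (∫ x : Fin n → ℝ, ∏ i, gfun j i (x i)) = 1 := by
          intro j
          rw [MeasureTheory.integral_fintype_prod_volume_eq_prod (gfun j)]
          exact Finset.prod_eq_one fun i _ => gfun_integral j i
        simp [hone]

private noncomputable def fexp (n : ℕ) : EuclideanSpace ℝ (Fin n) → ℝ :=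
  fun x => if ∀ i, 0 < x i then Real.exp (-∑ i, x i) else 0

private lemma fexp_nonneg (n : ℕ) : ∀ x, 0 ≤ fexp n x := by
  intro x; unfold fexp; dsimp only; split
  · positivity
  · exact le_refl _

private lemma fexp_le_one (n : ℕ) : ∀ x, fexp n x ≤ 1 := by
  intro x; unfold fexp; dsimp only; split
  · rename_i h
    rw [← Real.exp_zero]
    apply Real.exp_le_exp.mpr
    simp only [neg_nonpos]
    exact Finset.sum_nonneg fun i _ => (h i).le
  · exact zero_le_one

private lemma fexp_essSup (n : ℕ) : essSup (fexp n) volume = 1 := by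
  have hμ : (volume : Measure (EuclideanSpace ℝ (Fin n))) ≠ 0 := NeZero.ne _
  haveI : NeBot (ae (volume : Measure (EuclideanSpace ℝ (Fin n)))) := ae_neBot.mpr hμ
  have hbdd : Filter.IsBoundedUnder (· ≤ ·)
      (ae (volume : Measure (EuclideanSpace ℝ (Fin n)))) (fexp n) :=
    ⟨1, Filter.eventually_map.mpr (Eventually.of_forall (fexp_le_one n))⟩
  have hup : essSup (fexp n) volume ≤ 1 :=
    Filter.limsup_le_of_le (Filter.isCoboundedUnder_le_of_le _ (fexp_nonneg n))
      (Eventually.of_forall (fexp_le_one n))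
  have hlow : ∀ c : ℝ, 0 < c → c < 1 → c ≤ essSup (fexp n) volume := by
    intro c hc0 hc1
    have hlogc : Real.log c < 0 := Real.log_neg hc0 hc1
    set δ : ℝ := -Real.log c / (n + 1) with hδdef
    have hδ : 0 < δ := div_pos (by linarith) (by positivity)
    set U : Set (EuclideanSpace ℝ (Fin n)) := {x | ∀ i, x i ∈ Set.Ioo (0:ℝ) δ} with hU
    have hUopen : IsOpen U := by
      have : U = ⋂ i, (fun x : EuclideanSpace ℝ (Fin n) => x i) ⁻¹' Set.Ioo (0:ℝ) δ := by
        ext x; simp [hU, Set.mem_iInter]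
      rw [this]
      refine isOpen_iInter_of_finite fun i => ?_
      have hcont : Continuous fun x : EuclideanSpace ℝ (Fin n) => x i :=
        (EuclideanSpace.proj (𝕜 := ℝ) i).continuous
      exact isOpen_Ioo.preimage hcont
    have hUne : U.Nonempty := by
      refine ⟨WithLp.toLp 2 (fun _ => δ/2), fun i => ?_⟩
      show (0:ℝ) < δ/2 ∧ δ/2 < δ
      constructor <;> [positivity; linarith]
    have hsub : U ⊆ {x | c ≤ fexp n x} := by
      intro x hx
      have hpos : ∀ i, 0 < x i := fun i => (hx i).1
      have hsum : ∑ i, x i < -Real.log c := by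
        calc ∑ i, x i ≤ ∑ _i : Fin n, δ := Finset.sum_le_sum fun i _ => (hx i).2.le
          _ = n * δ := by simp [mul_comm]
          _ < (n+1) * δ := by nlinarith
          _ = -Real.log c := by rw [hδdef]; field_simp
      have hclt : c < fexp n x := by
        unfold fexp; dsimp only; rw [if_pos hpos]
        calc c = Real.exp (Real.log c) := (Real.exp_log hc0).symm
          _ < Real.exp (-∑ i, x i) := Real.exp_lt_exp.mpr (by linarith)
      exact hclt.le
    refine Filter.le_limsup_of_frequently_le ?_ hbdd
    rw [MeasureTheory.frequently_ae_iff]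
    intro hnull
    exact (hUopen.measure_pos volume hUne).ne' (measure_mono_null hsub hnull)
  have hge : (1:ℝ) ≤ essSup (fexp n) volume := by
    by_contra hlt
    push_neg at hlt
    have h0 : (0:ℝ) ≤ essSup (fexp n) volume := by
      refine Filter.le_limsup_of_frequently_le ?_ hbdd
      exact Filter.Frequently.of_forall (fexp_nonneg n)
    have := hlow ((essSup (fexp n) volume + 1)/2) (by linarith) (by linarith)
    linarith
  linarith

private lemma fexp_entropy (n : ℕ) :
    (∫ x, fexp n x * Real.log (fexp n x)) = -(n:ℝ) := by
  have h1 : (fun x : EuclideanSpace ℝ (Fin n) => fexp n x * Real.log (fexp n x))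
      = fun x : EuclideanSpace ℝ (Fin n) =>
          if ∀ i, 0 < x i then (-∑ i, x i) * Real.exp (-∑ i, x i) else 0 := by
    funext x; unfold fexp; dsimp only; split
    · rw [Real.log_exp]; ring
    · simp
  rw [h1, ← ((EuclideanSpace.volume_preserving_symm_measurableEquiv_toLp (Fin n)).symm).integral_comp' _]
  exact entropy_pi n

/-- If X in R^n has a log-concave probability density f, then
h(X) ≤ n - log ‖f‖_∞, with equality when f is the standard exponential density on
the positive orthant. -/
theorem entropy_upper_bound_logconcave
    (n : ℕ) (f : EuclideanSpace ℝ (Fin n) → ℝ)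
    (hf : ∀ x, 0 ≤ f x) (hmeas : Measurable f)
    (hprob : ∫ x, f x = 1)
    (hlc : ∀ x y : EuclideanSpace ℝ (Fin n), ∀ a b : ℝ, 0 ≤ a → 0 ≤ b → a + b = 1 →
      f x ^ a * f y ^ b ≤ f (a • x + b • y))
    (hent : Integrable (fun x => f x * Real.log (f x)))
    : (-∫ x, f x * Real.log (f x)) ≤ n - Real.log (essSup f volume)
      ∧ (f = (fun x => if ∀ i, 0 < x i then Real.exp (-∑ i, x i) else 0) →
          (-∫ x, f x * Real.log (f x)) = n - Real.log (essSup f volume)) := by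
  constructor
  · set I := ∫ x, f x * Real.log (f x) with hI
    set B := (n:ℝ) + I with hB
    have hint : Integrable f := by
      by_contra hni
      rw [integral_undef hni] at hprob; norm_num at hprob
    have hμ : (volume : Measure (EuclideanSpace ℝ (Fin n))) ≠ 0 := NeZero.ne _
    haveI : NeBot (ae (volume : Measure (EuclideanSpace ℝ (Fin n)))) := ae_neBot.mpr hμ
    have key : ∀ x₀, 0 < f x₀ → Real.log (f x₀) ≤ B :=
      fun x₀ hx₀ => key_ineq n f hf hmeas hint hprob hlc hent x₀ hx₀
    have hbound : ∀ x, f x ≤ Real.exp B := by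
      intro x
      rcases eq_or_lt_of_le (hf x) with h0 | h0
      · rw [← h0]; positivity
      · calc f x = Real.exp (Real.log (f x)) := (Real.exp_log h0).symm
          _ ≤ Real.exp B := Real.exp_le_exp.mpr (key x h0)
    have hup : essSup f volume ≤ Real.exp B :=
      Filter.limsup_le_of_le (Filter.isCoboundedUnder_le_of_le _ hf)
        (Eventually.of_forall hbound)
    have hposset : ∃ k : ℕ, volume {x | (1:ℝ)/(k+1) ≤ f x} ≠ 0 := by
      by_contra hno
      push_neg at hno
      have hae : ∀ᵐ x, f x ≤ 0 := by
        have h : ∀ᵐ (x : EuclideanSpace ℝ (Fin n)), ∀ k : ℕ, ¬ ((1:ℝ)/(k+1) ≤ f x) := by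
          rw [ae_all_iff]
          intro k
          rw [ae_iff]
          simpa using hno k
        filter_upwards [h] with x hx
        by_contra hpos
        push_neg at hpos
        obtain ⟨k, hk⟩ := exists_nat_gt (1 / f x)
        refine hx k ?_
        rw [div_le_iff₀ (by positivity)]
        rw [div_lt_iff₀ hpos] at hk
        nlinarith
      have hzero : ∫ x, f x = 0 := by
        rw [integral_eq_zero_iff_of_nonneg hf hint]
        filter_upwards [hae] with x hx
        exact le_antisymm hx (hf x)
      rw [hprob] at hzero; norm_num at hzero
    obtain ⟨k, hk⟩ := hposset
    have hlow : (1:ℝ)/(k+1) ≤ essSup f volume := by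
      refine Filter.le_limsup_of_frequently_le ?_
        ⟨Real.exp B, Filter.eventually_map.mpr (Eventually.of_forall hbound)⟩
      rw [MeasureTheory.frequently_ae_iff]
      intro h
      exact hk (measure_mono_null (fun x hx => hx) h)
    have hpos : 0 < essSup f volume := lt_of_lt_of_le (by positivity) hlow
    have hlog : Real.log (essSup f volume) ≤ B := by
      calc Real.log (essSup f volume) ≤ Real.log (Real.exp B) := Real.log_le_log hpos hup
        _ = B := Real.log_exp B
    linarith
  · intro hfeq
    have h2 : f = fexp n := hfeq
    rw [h2, fexp_entropy n, fexp_essSup n, Real.log_one]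
    ring
end

section
/- Fix p > 1. If a random vector X in R^n has a log-concave density f, then the Rényi entropy satisfies h_p(X) ≤ (n/(p-1)) log p + log(‖f‖_∞^{-1}). Equivalently, ∫ f^p dx ≥ p^{-n} ‖f‖_∞^{p-1}. -/
open MeasureTheory Real

/-- For p > 1 and a log-concave density f on R^n,
∫ f^p ≥ p^{-n} ‖f‖_∞^{p-1} (equivalently h_p(X) ≤ (n/(p-1)) log p - log ‖f‖_∞). -/
theorem renyi_upper_bound_logconcave
    (n : ℕ) (p : ℝ) (hp : 1 < p)
    (f : EuclideanSpace ℝ (Fin n) → ℝ)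
    (hf : ∀ x, 0 ≤ f x) (hmeas : Measurable f)
    (hprob : ∫ x, f x = 1)
    (hlc : ∀ x y : EuclideanSpace ℝ (Fin n), ∀ a b : ℝ, 0 ≤ a → 0 ≤ b → a + b = 1 →
      f x ^ a * f y ^ b ≤ f (a • x + b • y))
    : p ^ (-(n : ℝ)) * (essSup f volume) ^ (p - 1) ≤ ∫ x, f x ^ p := by
  have hp0 : (0:ℝ) < p := lt_trans one_pos hp
  have hpne : p ≠ 0 := ne_of_gt hp0
  have hp1 : (0:ℝ) < p - 1 := sub_pos.2 hp
  have hfin : Module.finrank ℝ (EuclideanSpace ℝ (Fin n)) = n := finrank_euclideanSpace_fin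
  -- f is integrable
  have hint : Integrable f := by
    by_contra h
    rw [integral_undef h] at hprob
    exact one_ne_zero hprob.symm
  -- there is a superlevel set of positive measure
  have hA : ∃ c : ℝ, 0 < c ∧ 0 < volume {x | c ≤ f x} := by
    by_contra h
    push_neg at h
    have hae : f =ᵐ[volume] 0 := by
      rw [Filter.EventuallyEq, ae_iff]
      have hsub : {x : EuclideanSpace ℝ (Fin n) | ¬ f x = (0 : EuclideanSpace ℝ (Fin n) → ℝ) x}
          ⊆ ⋃ k : ℕ, {x | (1:ℝ)/(k+1) ≤ f x} := by
        intro x hx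
        have hx' : 0 < f x := lt_of_le_of_ne (hf x) (Ne.symm hx)
        obtain ⟨k, hk⟩ := exists_nat_one_div_lt hx'
        exact Set.mem_iUnion.2 ⟨k, le_of_lt hk⟩
      refine measure_mono_null hsub (measure_iUnion_null fun k => ?_)
      exact le_antisymm (h _ (by positivity)) zero_le
    rw [integral_congr_ae hae] at hprob
    simp at hprob
  obtain ⟨c, hc, hApos⟩ := hA
  set A : Set (EuclideanSpace ℝ (Fin n)) := {x | c ≤ f x} with hA_def
  have hAmeas : MeasurableSet A := hmeas measurableSet_Ici
  have hAfin : volume A < ⊤ := hint.measure_ge_lt_top hc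
  -- scaled-translated copies of A
  have hBvol : ∀ x0 : EuclideanSpace ℝ (Fin n),
      volume {y : EuclideanSpace ℝ (Fin n) | (2:ℝ) • y - x0 ∈ A}
        = ENNReal.ofReal ((2:ℝ)^n)⁻¹ * volume A := by
    intro x0
    have hset : {y : EuclideanSpace ℝ (Fin n) | (2:ℝ) • y - x0 ∈ A}
        = ((2:ℝ) • ·) ⁻¹' ((fun z => z + (-x0)) ⁻¹' A) := by
      ext y; simp [sub_eq_add_neg]
    rw [hset, Measure.addHaar_preimage_smul volume (two_ne_zero) _,
      measure_preimage_add_right, hfin]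
    norm_num [abs_of_nonneg]
  set vB : ℝ := ((2:ℝ)^n)⁻¹ * (volume A).toReal with hvB_def
  have hvBpos : 0 < vB := by
    apply mul_pos (by positivity)
    exact ENNReal.toReal_pos hApos.ne' hAfin.ne
  set K1 : ℝ := (c ^ (2⁻¹:ℝ) * vB)⁻¹ with hK1_def
  have hK1pos : 0 < K1 := by
    apply inv_pos.2
    exact mul_pos (rpow_pos_of_pos hc _) hvBpos
  -- f is bounded by K1^2
  have hbound : ∀ x0, f x0 ≤ K1 ^ 2 := by
    intro x0
    rcases eq_or_lt_of_le (hf x0) with h0 | ht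
    · rw [← h0]; positivity
    set B : Set (EuclideanSpace ℝ (Fin n)) := {y | (2:ℝ) • y - x0 ∈ A} with hB_def
    have hBmeas : MeasurableSet B := by
      have : Measurable fun y : EuclideanSpace ℝ (Fin n) => (2:ℝ) • y - x0 :=
        (measurable_const_smul _).sub measurable_const
      exact this hAmeas
    have hμB : volume B = ENNReal.ofReal ((2:ℝ)^n)⁻¹ * volume A := hBvol x0
    have hμBne : volume B ≠ ⊤ := by
      rw [hμB]
      exact (ENNReal.mul_lt_top ENNReal.ofReal_lt_top hAfin).ne
    have hμBtoReal : (volume B).toReal = vB := by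
      rw [hμB, ENNReal.toReal_mul, ENNReal.toReal_ofReal (by positivity)]
    have hlb : ∀ y ∈ B, c ^ (2⁻¹:ℝ) * f x0 ^ (2⁻¹:ℝ) ≤ f y := by
      intro y hy
      have hx : c ≤ f ((2:ℝ) • y - x0) := hy
      have h1 := hlc ((2:ℝ) • y - x0) x0 2⁻¹ 2⁻¹ (by norm_num) (by norm_num) (by norm_num)
      have hyy : (2⁻¹:ℝ) • ((2:ℝ) • y - x0) + (2⁻¹:ℝ) • x0 = y := by
        rw [smul_sub, smul_smul]
        norm_num
      rw [hyy] at h1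
      refine le_trans ?_ h1
      have : c ^ (2⁻¹:ℝ) ≤ f ((2:ℝ) • y - x0) ^ (2⁻¹:ℝ) :=
        Real.rpow_le_rpow hc.le hx (by norm_num)
      exact mul_le_mul_of_nonneg_right this (Real.rpow_nonneg (hf x0) _)
    have h1 : (c ^ (2⁻¹:ℝ) * f x0 ^ (2⁻¹:ℝ)) * (volume B).toReal ≤ ∫ y in B, f y :=
      setIntegral_ge_of_const_le_real hBmeas hμBne hlb hint.integrableOn
    have h2 : ∫ y in B, f y ≤ 1 := by
      rw [← hprob]
      exact setIntegral_le_integral hint (Filter.Eventually.of_forall hf)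
    rw [hμBtoReal] at h1
    have h3 : c ^ (2⁻¹:ℝ) * f x0 ^ (2⁻¹:ℝ) * vB ≤ 1 := le_trans h1 h2
    have h4 : f x0 ^ (2⁻¹:ℝ) ≤ K1 := by
      rw [hK1_def, le_inv_comm₀ (by positivity) (by positivity)]
      calc c ^ (2⁻¹:ℝ) * vB ≤ (f x0 ^ (2⁻¹:ℝ))⁻¹ * 1 := by
            rw [le_inv_mul_iff₀ (by positivity)]
            nlinarith [Real.rpow_pos_of_pos ht (2⁻¹:ℝ)]
        _ = (f x0 ^ (2⁻¹:ℝ))⁻¹ := mul_one _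
    calc f x0 = (f x0 ^ (2⁻¹:ℝ)) ^ 2 := by
          rw [← Real.rpow_natCast (f x0 ^ (2⁻¹:ℝ)) 2, ← Real.rpow_mul (hf x0)]
          norm_num
      _ ≤ K1 ^ 2 := by
          have := Real.rpow_nonneg (hf x0) (2⁻¹:ℝ)
          nlinarith
  -- integrability of f^p
  have hmeasp : Measurable fun x => f x ^ p := hmeas.pow measurable_const
  have hip : Integrable (fun x => f x ^ p) := by
    refine Integrable.mono' (hint.const_mul ((K1^2) ^ (p-1))) hmeasp.aestronglyMeasurable
      (Filter.Eventually.of_forall fun x => ?_)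
    rw [Real.norm_eq_abs, abs_of_nonneg (Real.rpow_nonneg (hf x) p)]
    rcases eq_or_lt_of_le (hf x) with h0 | ht
    · rw [← h0, Real.zero_rpow hpne, mul_zero]
    · have h5 := Real.rpow_add ht (p-1) 1
      rw [Real.rpow_one, sub_add_cancel] at h5
      rw [h5]
      apply mul_le_mul_of_nonneg_right _ (hf x)
      exact Real.rpow_le_rpow (hf x) (hbound x) hp1.le
  set I : ℝ := ∫ x, f x ^ p with hI_def
  have hI0 : 0 ≤ I := integral_nonneg fun x => Real.rpow_nonneg (hf x) p
  -- key inequality for every x0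
  have key : ∀ x0, p ^ (-(n:ℝ)) * f x0 ^ (p-1) ≤ I := by
    intro x0
    have hpt : ∀ y, f (p • y + (1-p) • x0) * f x0 ^ (p-1) ≤ f y ^ p := by
      intro y
      have h1 := hlc (p • y + (1-p) • x0) x0 p⁻¹ (1 - p⁻¹)
        (inv_nonneg.2 hp0.le) (by rw [sub_nonneg]; exact inv_le_one_of_one_le₀ hp.le) (by ring)
      have hyy : (p⁻¹:ℝ) • (p • y + (1-p) • x0) + (1 - p⁻¹) • x0 = y := by
        rw [smul_add, smul_smul, smul_smul, inv_mul_cancel₀ hpne, one_smul,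
          add_assoc, ← add_smul]
        have : p⁻¹ * (1-p) + (1 - p⁻¹) = 0 := by field_simp; ring
        rw [this, zero_smul, add_zero]
      rw [hyy] at h1
      have h2 := Real.rpow_le_rpow (mul_nonneg (Real.rpow_nonneg (hf _) _) (Real.rpow_nonneg (hf _) _)) h1 hp0.le
      rw [Real.mul_rpow (Real.rpow_nonneg (hf _) _) (Real.rpow_nonneg (hf _) _),
        ← Real.rpow_mul (hf _), ← Real.rpow_mul (hf _), inv_mul_cancel₀ hpne,
        Real.rpow_one] at h2
      have hexp : (1 - p⁻¹) * p = p - 1 := by field_simp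
      rwa [hexp] at h2
    have hcv : ∫ y, f (p • y + (1-p) • x0) = p ^ (-(n:ℝ)) := by
      have h := Measure.integral_comp_smul_of_nonneg volume
        (fun z => f (z + (1-p) • x0)) p (hR := hp0.le)
      rw [integral_add_right_eq_self (μ := volume) f ((1-p) • x0), hprob, hfin,
        smul_eq_mul, mul_one] at h
      rw [h, Real.rpow_neg hp0.le, Real.rpow_natCast]
    have hmono : ∫ y, f (p • y + (1-p) • x0) * f x0 ^ (p-1) ≤ I :=
      integral_mono_of_nonneg
        (Filter.Eventually.of_forall fun y => mul_nonneg (hf _) (Real.rpow_nonneg (hf x0) _))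
        hip (Filter.Eventually.of_forall hpt)
    rwa [integral_mul_const, hcv] at hmono
  -- conclude via essSup
  have hvol : (volume : Measure (EuclideanSpace ℝ (Fin n))) ≠ 0 := by
    intro h0
    rw [h0, integral_zero_measure] at hprob
    exact one_ne_zero hprob.symm
  haveI : (ae (volume : Measure (EuclideanSpace ℝ (Fin n)))).NeBot := ae_neBot.2 hvol
  set K : ℝ := (p ^ (n:ℝ) * I) ^ (p-1)⁻¹ with hK_def
  have hpnI0 : 0 ≤ p ^ (n:ℝ) * I := mul_nonneg (Real.rpow_nonneg hp0.le _) hI0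
  have hfle : ∀ x0, f x0 ≤ K := by
    intro x0
    have h1 : f x0 ^ (p-1) ≤ p ^ (n:ℝ) * I := by
      have h2 : p ^ (-(n:ℝ)) * p ^ ((n:ℝ)) = 1 := by
        rw [← Real.rpow_add hp0]; simp
      calc f x0 ^ (p-1) = p ^ ((n:ℝ)) * (p ^ (-(n:ℝ)) * f x0 ^ (p-1)) := by
            rw [← mul_assoc, mul_comm (p ^ ((n:ℝ))) (p ^ (-(n:ℝ))), h2, one_mul]
        _ ≤ p ^ ((n:ℝ)) * I :=
            mul_le_mul_of_nonneg_left (key x0) (Real.rpow_nonneg hp0.le _)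
    calc f x0 = (f x0 ^ (p-1)) ^ (p-1)⁻¹ := (Real.rpow_rpow_inv (hf x0) hp1.ne').symm
      _ ≤ K := Real.rpow_le_rpow (Real.rpow_nonneg (hf x0) _) h1 (by positivity)
  have hbdd : Filter.IsBoundedUnder (· ≤ ·) (ae volume) f :=
    Filter.isBoundedUnder_of ⟨K, hfle⟩
  have hcob : Filter.IsCoboundedUnder (· ≤ ·) (ae volume) f :=
    Filter.IsBoundedUnder.isCoboundedUnder_le (Filter.isBoundedUnder_of ⟨0, fun x => hf x⟩)
  have hess_le : essSup f volume ≤ K :=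
    Filter.limsup_le_of_le hcob (Filter.Eventually.of_forall hfle)
  have hess0 : 0 ≤ essSup f volume :=
    Filter.le_limsup_of_frequently_le
      ((Filter.Eventually.of_forall hf).frequently) hbdd
  have hfinal : (essSup f volume) ^ (p-1) ≤ p ^ (n:ℝ) * I := by
    calc (essSup f volume) ^ (p-1) ≤ K ^ (p-1) :=
          Real.rpow_le_rpow hess0 hess_le hp1.le
      _ = p ^ (n:ℝ) * I := Real.rpow_inv_rpow hpnI0 hp1.ne'
  calc p ^ (-(n:ℝ)) * (essSup f volume) ^ (p-1)
      ≤ p ^ (-(n:ℝ)) * (p ^ (n:ℝ) * I) :=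
        mul_le_mul_of_nonneg_left hfinal (Real.rpow_nonneg hp0.le _)
    _ = I := by
        rw [← mul_assoc, ← Real.rpow_add hp0]
        simp
end

section
/- If a random vector X in R^n has a Gaussian density g with the same maximum density value as a log-concave density f of X', then (1/n)h(g) - 1/2 ≤ (1/n)h(f) ≤ (1/n)h(g) + 1/2. Equivalently, for log-concave f, |h(f)/n - (1/2 + log ‖f‖_∞^{-1/n})| ≤ 1/2. -/
open MeasureTheory Real Filter Set Pointwise Topology
open scoped ENNReal

/-- For a log-concave density f on R^n, the entropy per coordinate differs
from that of the Gaussian with the same maximum density by at most 1/2: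
|h(f)/n - (1/2 + log ‖f‖_∞^{-1/n})| ≤ 1/2.  (The Gaussian N(0,σ²I) with
(2πσ²)^{1/2} = ‖f‖_∞^{-1/n} has entropy per coordinate 1/2 + log ‖f‖_∞^{-1/n}.) -/
theorem entropy_gaussian_comparison_logconcave
    (n : ℕ) (hn : 0 < n)
    (f : EuclideanSpace ℝ (Fin n) → ℝ)
    (hf : ∀ x, 0 ≤ f x) (hmeas : Measurable f)
    (hprob : ∫ x, f x = 1)
    (hlc : ∀ x y : EuclideanSpace ℝ (Fin n), ∀ a b : ℝ, 0 ≤ a → 0 ≤ b → a + b = 1 →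
      f x ^ a * f y ^ b ≤ f (a • x + b • y))
    (hent : Integrable (fun x => f x * Real.log (f x)))
    : |(-∫ x, f x * Real.log (f x)) / n
        - (1 / 2 + Real.log ((essSup f volume) ^ (-(1 : ℝ) / n)))| ≤ 1 / 2 := by
  classical
  have hn' : (0:ℝ) < n := Nat.cast_pos.mpr hn
  have hfrank : Module.finrank ℝ (EuclideanSpace ℝ (Fin n)) = n := finrank_euclideanSpace_fin
  -- f is integrable
  have hInt : Integrable f := by
    by_contra h
    rw [integral_undef h] at hprob
    norm_num at hprob
  -- the lintegral of f is 1
  have hlint : ∫⁻ x, ENNReal.ofReal (f x) = 1 := by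
    rw [← ofReal_integral_eq_lintegral_ofReal hInt (Eventually.of_forall hf), hprob,
      ENNReal.ofReal_one]
  -- there is a superlevel set of positive measure
  have hex : ∃ ε : ℝ, 0 < ε ∧ 0 < volume {x : EuclideanSpace ℝ (Fin n) | ε ≤ f x} := by
    by_contra h
    push_neg at h
    have h0 : ∀ ε : ℝ, 0 < ε → volume {x : EuclideanSpace ℝ (Fin n) | ε ≤ f x} = 0 := by
      intro ε hε
      exact nonpos_iff_eq_zero.mp (h ε hε)
    have hU : volume {x : EuclideanSpace ℝ (Fin n) | 0 < f x} = 0 := by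
      have hsub : {x : EuclideanSpace ℝ (Fin n) | 0 < f x} ⊆ ⋃ k : ℕ, {x : EuclideanSpace ℝ (Fin n) | ((k:ℝ)+1)⁻¹ ≤ f x} := by
        intro x hx
        obtain ⟨k, hk⟩ := exists_nat_gt (f x)⁻¹
        refine Set.mem_iUnion.mpr ⟨k, ?_⟩
        have hk' : (f x)⁻¹ < (k:ℝ) + 1 := lt_trans hk (by linarith)
        have : ((k:ℝ)+1)⁻¹ < ((f x)⁻¹)⁻¹ := by
          apply inv_strictAnti₀ (inv_pos.mpr hx) hk'
        rw [inv_inv] at this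
        exact this.le
      refine measure_mono_null hsub (measure_iUnion_null fun k => h0 _ (by positivity))
    have hae : f =ᵐ[volume] 0 := by
      rw [Filter.EventuallyEq, ae_iff]
      refine measure_mono_null ?_ hU
      intro x hx
      simp only [Set.mem_setOf_eq, Pi.zero_apply] at hx ⊢
      exact lt_of_le_of_ne (hf x) (Ne.symm hx)
    have h0' := integral_eq_zero_of_ae hae
    rw [hprob] at h0'
    norm_num at h0'
  obtain ⟨ε, hε, hA⟩ := hex
  set A : Set (EuclideanSpace ℝ (Fin n)) := {x : EuclideanSpace ℝ (Fin n) | ε ≤ f x} with hAdef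
  have hAmeas : MeasurableSet A := hmeas measurableSet_Ici
  -- A has finite measure
  have hAfin : volume A ≠ ⊤ := by
    intro htop
    have h1 : ∫⁻ x in A, ENNReal.ofReal ε ≤ ∫⁻ x in A, ENNReal.ofReal (f x) :=
      setLIntegral_mono (by fun_prop) fun x hx => ENNReal.ofReal_le_ofReal hx
    have h2 : ∫⁻ x in A, ENNReal.ofReal (f x) ≤ 1 := hlint ▸ setLIntegral_le_lintegral _ _
    rw [setLIntegral_const, htop, ENNReal.mul_top
      (ENNReal.ofReal_pos.mpr hε).ne'] at h1
    exact (lt_irrefl _ (lt_of_le_of_lt (le_trans h1 h2) (by norm_num))).elim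
  set a : ℝ := (volume A).toReal with hadef
  have ha : 0 < a := ENNReal.toReal_pos hA.ne' hAfin
  -- global bound on f
  set K : ℝ := 2^n / (2⁻¹ ^ n * a) with hKdef
  have hK : 0 < K := div_pos (by positivity) (mul_pos (by positivity) ha)
  set B : ℝ := K^2 / ε with hBdef
  have hAB : ∀ x, f x ≤ B := by
    intro x
    set c : ℝ := (ε * f x) ^ (2⁻¹ : ℝ) with hcdef
    have hc0 : 0 ≤ c := Real.rpow_nonneg (mul_nonneg hε.le (hf x)) _
    set S : Set (EuclideanSpace ℝ (Fin n)) := {z : EuclideanSpace ℝ (Fin n) | c ≤ f z} with hSdef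
    have hSmeas : MeasurableSet S := hmeas measurableSet_Ici
    -- midpoint map image is in S
    have himg : (fun y => (2⁻¹:ℝ) • (x + y)) '' A ⊆ S := by
      rintro z ⟨y, hyA, rfl⟩
      have hmid := hlc x y 2⁻¹ 2⁻¹ (by norm_num) (by norm_num) (by norm_num)
      have heq : (2⁻¹:ℝ) • (x + y) = (2⁻¹:ℝ) • x + (2⁻¹:ℝ) • y := smul_add _ _ _
      have h1 : c ≤ f x ^ (2⁻¹:ℝ) * f y ^ (2⁻¹:ℝ) := by
        rw [hcdef, Real.mul_rpow hε.le (hf x)]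
        have hεy : ε ^ (2⁻¹:ℝ) ≤ f y ^ (2⁻¹:ℝ) :=
          Real.rpow_le_rpow hε.le hyA (by norm_num)
        calc ε ^ (2⁻¹:ℝ) * f x ^ (2⁻¹:ℝ) ≤ f y ^ (2⁻¹:ℝ) * f x ^ (2⁻¹:ℝ) :=
              mul_le_mul_of_nonneg_right hεy (Real.rpow_nonneg (hf x) _)
          _ = f x ^ (2⁻¹:ℝ) * f y ^ (2⁻¹:ℝ) := mul_comm _ _
      show c ≤ f ((2⁻¹:ℝ) • (x + y))
      rw [heq]
      exact le_trans h1 hmid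
    -- measure of the image
    have hμimg : ENNReal.ofReal (2⁻¹ ^ n) * volume A ≤ volume S := by
      have h1 : (fun y => (2⁻¹:ℝ) • (x + y)) '' A = (2⁻¹:ℝ) • ((fun y => x + y) '' A) := by
        rw [← Set.image_smul, Set.image_image]
      have h2 : (fun y => x + y) '' A = (fun z => -x + z) ⁻¹' A := by
        ext z
        constructor
        · rintro ⟨y, hy, rfl⟩; simpa using hy
        · intro hz; exact ⟨-x + z, hz, add_neg_cancel_left x z⟩
      have h3 : volume ((fun y => (2⁻¹:ℝ) • (x + y)) '' A) = ENNReal.ofReal (2⁻¹ ^ n) * volume A := by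
        rw [h1, Measure.addHaar_smul_of_nonneg volume (by norm_num), hfrank, h2,
          measure_preimage_add]
      calc ENNReal.ofReal (2⁻¹ ^ n) * volume A
          = volume ((fun y => (2⁻¹:ℝ) • (x + y)) '' A) := h3.symm
        _ ≤ volume S := measure_mono himg
    -- integral bound over S
    have hcS : ENNReal.ofReal c * volume S ≤ 1 := by
      have h1 : ∫⁻ z in S, ENNReal.ofReal c ≤ ∫⁻ z in S, ENNReal.ofReal (f z) :=
        setLIntegral_mono (by fun_prop) fun z hz => ENNReal.ofReal_le_ofReal hz
      have h2 : ∫⁻ z in S, ENNReal.ofReal (f z) ≤ 1 := hlint ▸ setLIntegral_le_lintegral _ _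
      rw [setLIntegral_const] at h1
      exact le_trans h1 h2
    -- combine
    have hcomb : ENNReal.ofReal (c * (2⁻¹ ^ n)) * volume A ≤ 1 := by
      rw [ENNReal.ofReal_mul hc0, mul_assoc]
      calc ENNReal.ofReal c * (ENNReal.ofReal (2⁻¹ ^ n) * volume A)
          ≤ ENNReal.ofReal c * volume S := mul_le_mul_right hμimg _
        _ ≤ 1 := hcS
    have hreal : c * (2⁻¹ ^ n) * a ≤ 1 := by
      have h1 : (ENNReal.ofReal (c * (2⁻¹ ^ n)) * volume A).toReal ≤ (1 : ℝ≥0∞).toReal :=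
        ENNReal.toReal_mono (by norm_num) hcomb
      rwa [ENNReal.toReal_mul, ENNReal.toReal_ofReal (by positivity), ENNReal.toReal_one,
        ← hadef] at h1
    have hcK : c ≤ K := by
      rw [hKdef]
      rw [div_eq_mul_inv]
      have h2 : (0:ℝ) < 2⁻¹ ^ n * a := by positivity
      have : c ≤ 1 / (2⁻¹ ^ n * a) := by
        rw [le_div_iff₀ h2]
        calc c * (2⁻¹ ^ n * a) = c * 2⁻¹ ^ n * a := by ring
          _ ≤ 1 := hreal
      have h4 : (1:ℝ) ≤ 2^n := one_le_pow₀ (by norm_num)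
      calc c ≤ 1 / (2⁻¹ ^ n * a) := this
        _ ≤ 2^n * (2⁻¹ ^ n * a)⁻¹ := by
            rw [one_div]
            nlinarith [inv_pos.mpr h2]
    -- conclude f x ≤ B
    have hsq : ε * f x = c ^ (2:ℕ) := by
      rw [hcdef, ← Real.rpow_natCast ((ε * f x) ^ (2⁻¹:ℝ)) 2, ← Real.rpow_mul (mul_nonneg hε.le (hf x))]
      norm_num
    have : ε * f x ≤ K ^ 2 := by
      rw [hsq]
      have := pow_le_pow_left₀ hc0 hcK 2
      simpa using this
    rw [hBdef]
    rw [le_div_iff₀ hε]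
    linarith
  -- essential supremum facts
  have hBdd : IsBoundedUnder (· ≤ ·) (ae (volume : Measure (EuclideanSpace ℝ (Fin n)))) f :=
    isBoundedUnder_of ⟨B, fun x => hAB x⟩
  have hfM : ∀ᵐ x, f x ≤ essSup f volume := ae_le_essSup hBdd
  set M : ℝ := essSup f volume with hMdef
  have hM0 : 0 < M := by
    by_contra h
    push_neg at h
    have hae : f =ᵐ[volume] 0 := by
      filter_upwards [hfM] with x hx
      exact le_antisymm (le_trans hx h) (hf x)
    have h0' := integral_eq_zero_of_ae hae
    rw [hprob] at h0'
    norm_num at h0'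
  set H : ℝ := ∫ x, f x * Real.log (f x) with hHdef
  -- upper bound : H ≤ log M
  have Hu : H ≤ Real.log M := by
    have h1 : H ≤ ∫ x, f x * Real.log M := by
      refine integral_mono_ae hent (hInt.mul_const _) ?_
      filter_upwards [hfM] with x hx
      rcases (hf x).eq_or_lt with h | h
      · simp [← h]
      · exact mul_le_mul_of_nonneg_left (Real.log_le_log h hx) (hf x)
    rwa [integral_mul_const, hprob, one_mul] at h1
  -- lower bound : log M - n ≤ H
  have key : ∀ c : ℝ, 0 < c → c < M → Real.log c - n ≤ H := by
    intro c hc hcM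
    -- find a point where f > c
    have hposset : volume {x : EuclideanSpace ℝ (Fin n) | c < f x} ≠ 0 := by
      intro h0
      have hae : ∀ᵐ x, f x ≤ c := by
        rw [ae_iff]
        simpa only [not_le] using h0
      have : M ≤ c := by
        rw [hMdef]
        have hcb : IsBoundedUnder (· ≥ ·) (ae (volume : Measure (EuclideanSpace ℝ (Fin n)))) f :=
          isBoundedUnder_of ⟨0, fun x => hf x⟩
        exact limsup_le_of_le hcb.isCoboundedUnder_le hae
      linarith
    obtain ⟨x₀, hx₀⟩ := nonempty_of_measure_ne_zero hposset
    have hx₀' : c < f x₀ := hx₀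
    -- main estimate for t ∈ (0,1)
    set G : ℝ → ℝ := fun t => c ^ (t-1) * ((t:ℝ)^n)⁻¹ with hGdef
    have hG1 : G 1 = 1 := by simp [hGdef]
    have hGest : ∀ t, t ∈ Ioo (0:ℝ) 1 → 1 + (t-1) * H ≤ G t := by
      rintro t ⟨ht0, ht1⟩
      set w : EuclideanSpace ℝ (Fin n) := (1-t) • x₀ with hwdef
      -- pointwise bound
      have k1 : ∀ y, f y ^ t ≤ c ^ (t-1) * f (t • y + w) := by
        intro y
        have h := hlc y x₀ t (1-t) ht0.le (by linarith) (by ring)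
        have h2 : c ^ (1-t) ≤ f x₀ ^ (1-t) :=
          Real.rpow_le_rpow hc.le hx₀'.le (by linarith)
        have h3 : f y ^ t * c ^ (1-t) ≤ f (t • y + w) := by
          refine le_trans ?_ h
          exact mul_le_mul_of_nonneg_left h2 (Real.rpow_nonneg (hf y) t)
        have hcpow : (0:ℝ) < c ^ (t-1) := Real.rpow_pos_of_pos hc _
        calc f y ^ t = (f y ^ t * c ^ (1-t)) * c ^ (t-1) := by
              rw [mul_assoc, ← Real.rpow_add hc]
              norm_num
          _ ≤ f (t • y + w) * c ^ (t-1) :=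
              mul_le_mul_of_nonneg_right h3 hcpow.le
          _ = c ^ (t-1) * f (t • y + w) := mul_comm _ _
      -- integrability of the shifted-scaled function
      have k2 : Integrable (fun z : EuclideanSpace ℝ (Fin n) => f (z + w)) := by
        have hmp := measurePreserving_add_right (volume : Measure (EuclideanSpace ℝ (Fin n))) w
        exact (hmp.integrable_comp_emb (MeasurableEquiv.addRight w).measurableEmbedding).mpr hInt
      have k3 : Integrable (fun y : EuclideanSpace ℝ (Fin n) => f (t • y + w)) := by
        have := k2.comp_smul (ne_of_gt ht0)
        exact this
      have k4 : ∫ y, f (t • y + w) = ((t:ℝ)^n)⁻¹ := by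
        have h1 : ∫ y, (fun z : EuclideanSpace ℝ (Fin n) => f (z + w)) (t • y) =
            |((t:ℝ) ^ Module.finrank ℝ (EuclideanSpace ℝ (Fin n)))⁻¹| • ∫ z, f (z + w) :=
          Measure.integral_comp_smul volume (fun z : EuclideanSpace ℝ (Fin n) => f (z + w)) t
        have h2 : ∫ z, f (z + w) = 1 := by
          have hmp := measurePreserving_add_right (volume : Measure (EuclideanSpace ℝ (Fin n))) w
          rw [hmp.integral_comp (MeasurableEquiv.addRight w).measurableEmbedding f, hprob]
        rw [h2] at h1
        simp only [smul_eq_mul, mul_one] at h1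
        rw [hfrank] at h1
        rw [h1, abs_of_nonneg (by positivity)]
      -- integrability of f^t
      have hmt : Measurable (fun y => f y ^ t) :=
        (Real.continuous_rpow_const ht0.le).measurable.comp hmeas
      have k5 : Integrable (fun y => f y ^ t) := by
        refine Integrable.mono' (k3.const_mul (c ^ (t-1))) hmt.aestronglyMeasurable ?_
        filter_upwards with y
        rw [Real.norm_of_nonneg (Real.rpow_nonneg (hf y) t)]
        exact k1 y
      -- upper bound for ∫ f^t
      have k6 : ∫ y, f y ^ t ≤ G t := by
        calc ∫ y, f y ^ t ≤ ∫ y, c ^ (t-1) * f (t • y + w) :=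
              integral_mono k5 (k3.const_mul _) k1
          _ = c ^ (t-1) * ∫ y, f (t • y + w) := integral_const_mul _ _
          _ = G t := by rw [k4]
      -- lower bound for ∫ f^t
      have k7 : 1 + (t-1) * H ≤ ∫ y, f y ^ t := by
        have pt : ∀ y, f y + (t-1) * (f y * Real.log (f y)) ≤ f y ^ t := by
          intro y
          rcases (hf y).eq_or_lt with h | h
          · simp [← h, Real.zero_rpow (ne_of_gt ht0)]
          · set u := f y with hu
            have hlog : 1 + (t-1) * Real.log u ≤ u ^ (t-1 : ℝ) := by
              have := Real.add_one_le_exp ((t-1) * Real.log u)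
              rw [Real.rpow_def_of_pos h, mul_comm (Real.log u)]
              linarith
            have hmul : u * (1 + (t-1) * Real.log u) ≤ u * u ^ (t-1:ℝ) :=
              mul_le_mul_of_nonneg_left hlog h.le
            have huu : u * u ^ (t-1:ℝ) = u ^ t := by
              nth_rewrite 1 [← Real.rpow_one u]
              rw [← Real.rpow_add h]
              norm_num
            calc u + (t-1) * (u * Real.log u) = u * (1 + (t-1) * Real.log u) := by ring
              _ ≤ u * u ^ (t-1:ℝ) := hmul
              _ = u ^ t := huu
        have hIsum : Integrable (fun y => f y + (t-1) * (f y * Real.log (f y))) :=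
          hInt.add (hent.const_mul _)
        have h1 : ∫ y, (f y + (t-1) * (f y * Real.log (f y))) ≤ ∫ y, f y ^ t :=
          integral_mono hIsum k5 pt
        rwa [integral_add hInt (hent.const_mul _), integral_const_mul, hprob, ← hHdef] at h1
      exact le_trans k7 k6
    -- slope inequality
    have hslope : ∀ t, t ∈ Ioo (0:ℝ) 1 → (G t - 1) / (t - 1) ≤ H := by
      rintro t ht
      have ht1 : t - 1 < 0 := by linarith [ht.2]
      rw [div_le_iff_of_neg ht1]
      have := hGest t ht
      linarith
    -- derivative of G at 1
    have hGd : HasDerivAt G (Real.log c - n) 1 := by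
      have d1 : HasDerivAt (fun t : ℝ => c ^ (t-1)) (Real.log c) 1 := by
        have h := ((Real.hasStrictDerivAt_const_rpow hc 1).hasDerivAt).div_const c
        have hfun : (fun t : ℝ => c ^ t / c) = fun t : ℝ => c ^ (t-1) := by
          funext s
          rw [Real.rpow_sub hc, Real.rpow_one]
        rw [hfun] at h
        refine h.congr_deriv ?_
        rw [Real.rpow_one]
        field_simp
      have d2 : HasDerivAt (fun t : ℝ => ((t:ℝ)^n)⁻¹)
          (-(↑n * (1:ℝ) ^ (n-1)) / ((1:ℝ)^n)^2) 1 :=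
        (hasDerivAt_pow n 1).inv (by simp)
      have := d1.mul d2
      refine this.congr_deriv ?_
      simp [Real.rpow_zero]
      ring
    -- take the limit t → 1⁻
    have htend : Tendsto (slope G 1) (𝓝[<] (1:ℝ)) (𝓝 (Real.log c - n)) := by
      have h1 := hasDerivAt_iff_tendsto_slope.mp hGd
      exact h1.mono_left (nhdsWithin_mono 1 fun x hx => ne_of_lt hx)
    have hfinal : Real.log c - n ≤ H := by
      refine le_of_tendsto htend ?_
      have hIoo : Ioo (0:ℝ) 1 ∈ 𝓝[<] (1:ℝ) := Ioo_mem_nhdsLT_of_mem (by norm_num)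
      filter_upwards [hIoo] with t ht
      rw [slope_def_field, hG1]
      exact hslope t ht
    exact hfinal
  have Hl : Real.log M - n ≤ H := by
    have hε' : ∀ δ : ℝ, 0 < δ → Real.log M - n ≤ H + δ := by
      intro δ hδ
      have hcpos : 0 < M * Real.exp (-δ) := by positivity
      have hclt : M * Real.exp (-δ) < M := by
        nth_rewrite 2 [← mul_one M]
        exact mul_lt_mul_of_pos_left (Real.exp_lt_one_iff.mpr (by linarith)) hM0
      have := key (M * Real.exp (-δ)) hcpos hclt
      rw [Real.log_mul hM0.ne' (Real.exp_pos _).ne', Real.log_exp] at this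
      linarith
    linarith [le_of_forall_pos_le_add hε']
  -- final arithmetic
  rw [Real.log_rpow hM0]
  have heq : (-H) / n - (1/2 + (-(1:ℝ)/n) * Real.log M) = (Real.log M - H) / n - 1/2 := by
    field_simp
    ring
  rw [heq, abs_le]
  constructor
  · have h1 : 0 ≤ (Real.log M - H) / n := div_nonneg (by linarith) hn'.le
    linarith
  · have h2 : (Real.log M - H) / n ≤ 1 := (div_le_one hn').mpr (by linarith)
    linarith
end

section
/- For a positive definite n×n matrix C, det(C)^{1/n} = min{ tr(CA)/n : A positive semidefinite, det(A) = 1 }. -/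
open Matrix Real

lemma my_trace_eq_sum_eigenvalues {n : ℕ} {B : Matrix (Fin n) (Fin n) ℝ}
    (hB : B.IsHermitian) : B.trace = ∑ i, hB.eigenvalues i := by
  simpa using hB.trace_eq_sum_eigenvalues

lemma psd_det_rpow_le_trace {n : ℕ} (hn : 0 < n) {B : Matrix (Fin n) (Fin n) ℝ}
    (hB : B.PosSemidef) : B.det ^ ((1 : ℝ) / n) ≤ B.trace / n := by
  have hev := hB.eigenvalues_nonneg
  have hdet : B.det = ∏ i, hB.1.eigenvalues i := by
    simpa using hB.1.det_eq_prod_eigenvalues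
  have htr : B.trace = ∑ i, hB.1.eigenvalues i := my_trace_eq_sum_eigenvalues hB.1
  have hw : ∑ _i : Fin n, (1 : ℝ) / n = 1 := by
    rw [Finset.sum_const, Finset.card_univ, Fintype.card_fin, nsmul_eq_mul]
    field_simp
  have amgm := Real.geom_mean_le_arith_mean_weighted Finset.univ
    (fun _ => (1 : ℝ) / n) hB.1.eigenvalues
    (fun i _ => by positivity) hw (fun i _ => hev i)
  calc B.det ^ ((1 : ℝ) / n) = ∏ i, hB.1.eigenvalues i ^ ((1 : ℝ) / n) := by
        rw [hdet, ← Real.finset_prod_rpow _ _ (fun i _ => hev i)]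
    _ ≤ ∑ i, (1 : ℝ) / n * hB.1.eigenvalues i := amgm
    _ = B.trace / n := by
        rw [htr, Finset.sum_div]
        exact Finset.sum_congr rfl fun i _ => by ring

/-- For a positive definite n×n matrix C,
det(C)^{1/n} = min { tr(C A)/n : A positive semidefinite, det A = 1 }. -/
theorem det_rpow_eq_min_trace
    (n : ℕ) (hn : 0 < n)
    (C : Matrix (Fin n) (Fin n) ℝ) (hC : C.PosDef)
    : IsLeast
        {t : ℝ | ∃ A : Matrix (Fin n) (Fin n) ℝ,
          A.PosSemidef ∧ A.det = 1 ∧ t = (C * A).trace / n}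
        (C.det ^ ((1 : ℝ) / n)) := by
  have hdet : (0 : ℝ) < C.det := hC.det_pos
  set c : ℝ := C.det ^ ((1 : ℝ) / n) with hc
  have hcpos : 0 < c := Real.rpow_pos_of_pos hdet _
  have hnR : (n : ℝ) ≠ 0 := Nat.cast_ne_zero.mpr hn.ne'
  constructor
  · -- membership: A = c • C⁻¹
    refine ⟨c • C⁻¹, ?_, ?_, ?_⟩
    · -- PosSemidef
      have hinv := hC.inv
      refine posSemidef_iff_dotProduct_mulVec.mpr ⟨?_, fun x => ?_⟩
      · rw [Matrix.IsHermitian, conjTranspose_smul, hinv.1]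
        simp
      · have := (posSemidef_iff_dotProduct_mulVec.mp hinv.posSemidef).2 x
        rw [Matrix.smul_mulVec, dotProduct_smul]
        simpa using mul_nonneg hcpos.le this
    · rw [Matrix.det_smul, Matrix.det_nonsing_inv, Fintype.card_fin]
      have : c ^ n = C.det := by
        rw [hc, ← Real.rpow_natCast (C.det ^ ((1:ℝ)/n)) n, ← Real.rpow_mul hdet.le]
        field_simp
        exact Real.rpow_one _
      rw [this, Ring.inverse_eq_inv, mul_inv_cancel₀ hdet.ne']
    · rw [Matrix.mul_smul, Matrix.trace_smul, Matrix.mul_nonsing_inv _ hdet.ne'.isUnit]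
      simp [smul_eq_mul, hnR]
  · -- lower bound
    rintro t ⟨A, hA, hdetA, rfl⟩
    obtain ⟨S, hSh, hSS⟩ : ∃ S : Matrix (Fin n) (Fin n) ℝ, S.IsHermitian ∧ S * S = C := by
      open scoped MatrixOrder in
      exact ⟨CFC.sqrt C, (CFC.sqrt_nonneg C).posSemidef.1,
        CFC.sqrt_mul_sqrt_self C hC.posSemidef.nonneg⟩
    have hB : (S * A * S).PosSemidef := by
      have := hA.mul_mul_conjTranspose_same S
      rwa [hSh.eq] at this
    have htr : (S * A * S).trace = (C * A).trace := by
      rw [Matrix.trace_mul_cycle, hSS]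
    have hd : (S * A * S).det = C.det := by
      rw [Matrix.det_mul, Matrix.det_mul, hdetA, mul_one, ← Matrix.det_mul, hSS]
    have := psd_det_rpow_le_trace hn hB
    rwa [hd, htr] at this
end

section
/- Let X in R^n have density f = φ^{-β} with φ positive convex and β ≥ n+1, normalized so that inf φ = 1 (i.e., ‖f‖_∞ = 1). Then n ≥ β(1 - ∫_Ω φ^{-β-1} dx), i.e., ∫_Ω φ^{-(β+1)} dx ≥ 1 - n/β. -/
open MeasureTheory Real Classical

lemma rpow_neg_ge_one_sub_mul {u q : ℝ} (hu : 0 < u) (hq : 0 ≤ q) :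
    1 - q * (u - 1) ≤ u ^ (-q) := by
  rcases le_or_gt (1 - q * (u - 1)) 0 with h | h
  · exact h.trans (rpow_nonneg hu.le _)
  · set v : ℝ := 1 - q * (u - 1) with hv
    have hq1 : (0:ℝ) < q + 1 := by linarith
    have amgm := Real.geom_mean_le_arith_mean2_weighted
      (div_nonneg hq hq1.le) (div_nonneg zero_le_one hq1.le) hu.le h.le
      (by field_simp)
    have hsum : q / (q + 1) * u + 1 / (q + 1) * v = 1 := by
      field_simp [hv]; ring
    rw [hsum] at amgm
    have key : u ^ q * v ≤ 1 := by
      have h2 := rpow_le_rpow (by positivity) amgm hq1.le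
      rwa [Real.mul_rpow (by positivity) (by positivity), one_rpow,
        ← Real.rpow_mul hu.le, ← Real.rpow_mul h.le,
        div_mul_cancel₀ _ hq1.ne', one_div, inv_mul_cancel₀ hq1.ne',
        Real.rpow_one] at h2
    have hup : (0:ℝ) < u ^ q := rpow_pos_of_pos hu _
    rw [Real.rpow_neg hu.le, ← one_div, le_div_iff₀ hup]
    linarith [key]

lemma rpow_neg_tangent {a b β : ℝ} (ha : 0 < a) (hb : 0 < b) (hβ : 0 ≤ β) :
    a ^ (-β) - β * a ^ (-β - 1) * (b - a) ≤ b ^ (-β) := by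
  have h1 : 1 - β * (b / a - 1) ≤ (b / a) ^ (-β) :=
    rpow_neg_ge_one_sub_mul (div_pos hb ha) hβ
  have h2 : b ^ (-β) = a ^ (-β) * (b / a) ^ (-β) := by
    rw [← Real.mul_rpow ha.le (by positivity), mul_div_cancel₀ _ ha.ne']
  have h3 : a ^ (-β - 1) = a ^ (-β) / a := by
    rw [Real.rpow_sub ha, Real.rpow_one]
  have hap : (0:ℝ) < a ^ (-β) := rpow_pos_of_pos ha _
  have h4 := mul_le_mul_of_nonneg_left h1 hap.le
  rw [h2, h3]
  calc a ^ (-β) - β * (a ^ (-β) / a) * (b - a)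
      = a ^ (-β) * (1 - β * (b / a - 1)) := by field_simp
    _ ≤ a ^ (-β) * (b / a) ^ (-β) := h4

/-- If f = φ^{-β} is a probability density on an open convex set Ω ⊆ R^n,
with φ positive convex and β ≥ n+1, normalized so that inf_Ω φ = 1 (i.e. ‖f‖_∞ = 1),
then n ≥ β (1 - ∫_Ω φ^{-β-1}), i.e. ∫_Ω φ^{-(β+1)} ≥ 1 - n/β. -/
theorem convex_density_moment_inequality
    (n : ℕ) (hn : 0 < n) (β : ℝ) (hβ : (n : ℝ) + 1 ≤ β)
    (Ω : Set (EuclideanSpace ℝ (Fin n))) (hΩopen : IsOpen Ω) (hΩconv : Convex ℝ Ω)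
    (φ : EuclideanSpace ℝ (Fin n) → ℝ)
    (hφpos : ∀ x ∈ Ω, 0 < φ x) (hφconv : ConvexOn ℝ Ω φ)
    (hinf : IsGLB (φ '' Ω) 1)
    (f : EuclideanSpace ℝ (Fin n) → ℝ)
    (hfdef : f = fun x => if x ∈ Ω then φ x ^ (-β) else 0)
    (hprob : ∫ x, f x = 1)
    : 1 - (n : ℝ) / β ≤ ∫ x in Ω, φ x ^ (-(β + 1)) := by
  have hβpos : (0:ℝ) < β := lt_of_lt_of_le (by positivity) hβ
  have hnpos : (0:ℝ) < n := Nat.cast_pos.mpr hn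
  have hΩmeas : MeasurableSet Ω := hΩopen.measurableSet
  have hφ1 : ∀ x ∈ Ω, 1 ≤ φ x := fun x hx => hinf.1 ⟨x, hx, rfl⟩
  have hφcont : ContinuousOn φ Ω := hφconv.continuousOn hΩopen
  have hf_ind : f = Ω.indicator (fun x => φ x ^ (-β)) := by
    ext x; by_cases hx : x ∈ Ω <;> simp [hfdef, hx]
  have hfint : Integrable f := by
    by_contra h
    rw [integral_undef h] at hprob; norm_num at hprob
  have hFint : IntegrableOn (fun x => φ x ^ (-β)) Ω := by
    rw [← integrable_indicator_iff hΩmeas, ← hf_ind]; exact hfint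
  have hint1 : ∫ x in Ω, φ x ^ (-β) = 1 := by
    rw [← integral_indicator hΩmeas, ← hf_ind, hprob]
  -- integrability of φ ^ (-(β+1)) on Ω
  have hcontI : ContinuousOn (fun x => φ x ^ (-(β+1))) Ω :=
    hφcont.rpow_const fun x hx => Or.inl (hφpos x hx).ne'
  have hIint : IntegrableOn (fun x => φ x ^ (-(β+1))) Ω := by
    refine hFint.mono' (hcontI.aestronglyMeasurable hΩmeas) ?_
    refine (ae_restrict_iff' hΩmeas).mpr (ae_of_all _ fun x hx => ?_)
    rw [Real.norm_eq_abs, abs_of_nonneg (rpow_nonneg (hφpos x hx).le _)]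
    exact Real.rpow_le_rpow_of_exponent_le (hφ1 x hx) (by linarith)
  set I : ℝ := ∫ x in Ω, φ x ^ (-(β+1)) with hI
  have hInonneg : 0 ≤ I :=
    setIntegral_nonneg hΩmeas fun x hx => rpow_nonneg (hφpos x hx).le _
  -- key bound for each point y ∈ Ω
  have key : ∀ y ∈ Ω, β * (1 - φ y * I) ≤ n := by
    intro y hy
    set c := φ y with hc
    have hc1 : 1 ≤ c := hφ1 y hy
    have hc0 : (0:ℝ) < c := by linarith
    rcases le_or_gt (1 - c * I) 0 with hD | hD
    · calc β * (1 - c*I) ≤ 0 := mul_nonpos_of_nonneg_of_nonpos hβpos.le hD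
        _ ≤ n := hnpos.le
    set D := 1 - c * I with hDdef
    have ht : ∀ t ∈ Set.Ioo (0:ℝ) 1, t^n * (1 + β * (1-t) * D) ≤ 1 := by
      rintro t ⟨ht0, ht1⟩
      have h1t : (0:ℝ) < 1 - t := by linarith
      have hpos : ∀ x ∈ Ω, 0 < t * φ x + (1-t) * c := fun x hx => by
        have := hφpos x hx; nlinarith
      set H : EuclideanSpace ℝ (Fin n) → ℝ :=
        Ω.indicator (fun x => (t * φ x + (1-t) * c) ^ (-β)) with hHdef
      have hHcont : ContinuousOn (fun x => (t * φ x + (1-t) * c) ^ (-β)) Ω :=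
        ((continuousOn_const.mul hφcont).add continuousOn_const).rpow_const
          fun x hx => Or.inl (hpos x hx).ne'
      have hHnn : ∀ u, 0 ≤ H u := fun u =>
        Set.indicator_nonneg (fun x hx => rpow_nonneg (hpos x hx).le _) u
      have hcomp : ∀ u, H (t⁻¹ • (u - (1-t) • y)) ≤ f u := by
        intro u
        set x := t⁻¹ • (u - (1-t) • y) with hx
        have hfnn : 0 ≤ f u := by
          simp only [hfdef]; split
          · exact rpow_nonneg (hφpos _ ‹_›).le _
          · exact le_refl 0
        by_cases hmem : x ∈ Ω
        · have hu : u = t • x + (1-t) • y := by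
            have h5 : t • x = u - (1-t) • y := by
              rw [hx, smul_smul, mul_inv_cancel₀ ht0.ne', one_smul]
            rw [h5, sub_add_cancel]
          have huΩ : u ∈ Ω := hu ▸ hΩconv hmem hy ht0.le h1t.le (by ring)
          have hφu : φ u ≤ t * φ x + (1-t) * c := by
            calc φ u = φ (t • x + (1-t) • y) := by rw [← hu]
              _ ≤ t * φ x + (1-t) * φ y := hφconv.2 hmem hy ht0.le h1t.le (by ring)
          have hle : (t * φ x + (1-t)*c) ^ (-β) ≤ φ u ^ (-β) :=
            Real.rpow_le_rpow_of_nonpos (hφpos u huΩ) hφu (by linarith)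
          rw [hHdef]
          rw [Set.indicator_of_mem hmem]
          simp only [hfdef, huΩ, if_true]
          exact hle
        · rw [hHdef, Set.indicator_of_notMem hmem]; exact hfnn
      have hup : ∫ u, H (t⁻¹ • (u - (1-t) • y)) ≤ 1 := by
        have h6 := integral_mono_of_nonneg (ae_of_all _ fun u => hHnn _) hfint
          (ae_of_all _ hcomp)
        rwa [hprob] at h6
      have hcov : ∫ u, H (t⁻¹ • (u - (1-t) • y)) = t^n * ∫ u, H u := by
        have e1 : (fun u : EuclideanSpace ℝ (Fin n) => H (t⁻¹ • (u - (1-t) • y)))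
            = fun u => (fun w => H (w - t⁻¹ • ((1-t) • y))) (t⁻¹ • u) := by
          funext u; simp only [smul_sub]
        rw [e1, Measure.integral_comp_inv_smul volume (fun w => H (w - t⁻¹ • ((1-t) • y))) t,
          integral_sub_right_eq_self H _, finrank_euclideanSpace_fin,
          abs_of_nonneg (pow_nonneg ht0.le n), smul_eq_mul]
      have hHeq : ∫ u, H u = ∫ x in Ω, (t * φ x + (1-t) * c) ^ (-β) :=
        integral_indicator hΩmeas
      have hHint : IntegrableOn (fun x => (t * φ x + (1-t) * c) ^ (-β)) Ω := by
        refine (hFint.const_mul (t ^ (-β))).mono'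
          (hHcont.aestronglyMeasurable hΩmeas) ?_
        refine (ae_restrict_iff' hΩmeas).mpr (ae_of_all _ fun x hx => ?_)
        rw [Real.norm_eq_abs, abs_of_nonneg (rpow_nonneg (hpos x hx).le _)]
        have h1 : t * φ x ≤ t * φ x + (1-t) * c := by nlinarith
        have h2 : (t * φ x + (1-t)*c) ^ (-β) ≤ (t * φ x) ^ (-β) :=
          Real.rpow_le_rpow_of_nonpos (mul_pos ht0 (hφpos x hx)) h1 (by linarith)
        calc (t * φ x + (1-t)*c) ^ (-β) ≤ (t * φ x) ^ (-β) := h2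
          _ = t ^ (-β) * φ x ^ (-β) := Real.mul_rpow ht0.le (hφpos x hx).le
      have hlow : 1 + β * (1-t) * D ≤ ∫ u, H u := by
        rw [hHeq]
        have hpt : ∀ x ∈ Ω,
            φ x ^ (-β) + (β*(1-t)) * (φ x ^ (-β) - c * φ x ^ (-(β+1)))
              ≤ (t * φ x + (1-t) * c) ^ (-β) := by
          intro x hx
          have hφx := hφpos x hx
          have htan := rpow_neg_tangent hφx (hpos x hx) hβpos.le
          have hexp : φ x ^ (-β - 1) = φ x ^ (-(β+1)) := by congr 1; ring
          rw [hexp] at htan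
          have hid : φ x ^ (-β) = φ x * φ x ^ (-(β+1)) := by
            rw [show -β = 1 + (-(β+1)) by ring, Real.rpow_add hφx, Real.rpow_one]
          refine le_trans (le_of_eq ?_) htan
          rw [hid]; ring
        have hgint : IntegrableOn
            (fun x => φ x ^ (-β) + (β*(1-t)) * (φ x ^ (-β) - c * φ x ^ (-(β+1)))) Ω :=
          hFint.add (((hFint.sub (hIint.const_mul c)).const_mul (β*(1-t))))
        have hval : ∫ x in Ω,
            (φ x ^ (-β) + (β*(1-t)) * (φ x ^ (-β) - c * φ x ^ (-(β+1))))
            = 1 + β * (1-t) * D := by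
          have e : ∀ x : EuclideanSpace ℝ (Fin n),
              φ x ^ (-β) + (β*(1-t)) * (φ x ^ (-β) - c * φ x ^ (-(β+1)))
                = (1 + β*(1-t)) * φ x ^ (-β) + (-(β*(1-t))*c) * φ x ^ (-(β+1)) :=
            fun x => by ring
          simp_rw [e]
          rw [integral_add (hFint.const_mul _) (hIint.const_mul _),
            integral_const_mul, integral_const_mul, hint1, ← hI]
          ring
        calc 1 + β * (1-t) * D
            = ∫ x in Ω, (φ x ^ (-β) + (β*(1-t)) * (φ x ^ (-β) - c * φ x ^ (-(β+1)))) :=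
              hval.symm
          _ ≤ ∫ x in Ω, (t * φ x + (1-t) * c) ^ (-β) :=
              setIntegral_mono_on hgint hHint hΩmeas hpt
      calc t^n * (1 + β*(1-t)*D)
          ≤ t^n * ∫ u, H u := mul_le_mul_of_nonneg_left hlow (pow_nonneg ht0.le n)
        _ = ∫ u, H (t⁻¹ • (u - (1-t) • y)) := hcov.symm
        _ ≤ 1 := hup
    have hε : ∀ ε ∈ Set.Ioo (0:ℝ) 1, β * D ≤ n + (n * β * D) * ε := by
      rintro ε ⟨hε0, hε1⟩
      have h := ht (1-ε) ⟨by linarith, by linarith⟩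
      rw [sub_sub_cancel] at h
      have hb' : 1 - (n:ℝ)*ε ≤ (1-ε)^n := by
        have hb := one_add_mul_le_pow (a := -ε) (by linarith) n
        rw [show (1:ℝ) + -ε = 1 - ε by ring] at hb
        linarith
      have hfac : (0:ℝ) ≤ 1 + β*ε*D := by positivity
      have h3 : (1 - (n:ℝ)*ε)*(1+β*ε*D) ≤ 1 :=
        le_trans (mul_le_mul_of_nonneg_right hb' hfac) h
      nlinarith [h3, mul_pos hε0 hε0, mul_pos (mul_pos hβpos hD) hε0]
    have htd : Filter.Tendsto (fun ε : ℝ => (n:ℝ) + (n * β * D) * ε)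
        (nhdsWithin 0 (Set.Ioi 0)) (nhds ((n:ℝ) + (n * β * D) * 0)) :=
      ((continuous_const.add (continuous_const.mul continuous_id)).tendsto 0).mono_left
        nhdsWithin_le_nhds
    have hlim := ge_of_tendsto htd
      (by
        filter_upwards [Ioo_mem_nhdsGT_of_mem (Set.left_mem_Ico.mpr zero_lt_one)]
          with ε hε'
        exact hε ε hε')
    simpa using hlim
  -- conclude via infimum
  have final : ∀ δ : ℝ, 0 < δ → 1 - (n:ℝ)/β ≤ (1 + δ) * I := by
    intro δ hδ
    obtain ⟨y, hy, hyδ⟩ : ∃ y ∈ Ω, φ y < 1 + δ := by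
      by_contra h
      push_neg at h
      have : (1 + δ) ∈ lowerBounds (φ '' Ω) := by
        rintro z ⟨x, hx, rfl⟩; exact h x hx
      linarith [hinf.2 this]
    have hk := key y hy
    have hc1 : 1 ≤ φ y := hφ1 y hy
    have h1 : 1 - (n:ℝ)/β ≤ φ y * I := by
      have hd : (n:ℝ)/β * β = n := div_mul_cancel₀ _ hβpos.ne'
      nlinarith
    calc 1 - (n:ℝ)/β ≤ φ y * I := h1
      _ ≤ (1 + δ) * I := mul_le_mul_of_nonneg_right hyδ.le hInonneg
  have htd : Filter.Tendsto (fun δ : ℝ => (1 + δ) * I)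
      (nhdsWithin 0 (Set.Ioi 0)) (nhds ((1 + 0) * I)) :=
    (((continuous_const.add continuous_id).mul continuous_const).tendsto 0).mono_left
      nhdsWithin_le_nhds
  have := ge_of_tendsto htd
    (by
      filter_upwards [self_mem_nhdsWithin] with δ (hδ : δ ∈ Set.Ioi (0:ℝ))
      exact final δ hδ)
  simpa using this
end
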